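/- arXiv:1906.12056 — 5 statements merged into one kernel-verified Lean document; each statement's English description precedes it below -/
import Mathlib

section
/- For every σ > 0 and every integer k ≥ 0, (1/2π) ∫₀^{2π} e^{ikθ} / (1 + 2σ(1 − cos θ))² dθ = (k+1)·ω^k/(4σ+1) + 2σ·ω^{k+1}/(4σ+1)^{3/2}. -/
/-!
With `z = e^{iθ}` and `ω`, `1/ω` the roots of `σ x² - (2σ+1) x + σ`, the symbol factors as
`1 + 2σ(1 - cos θ) = σ (1 - ω z)(z - ω) / (ω z)`. The Fourier coefficient therefore becomes
`(ω/σ)² (2πi)⁻¹ ∮_{|z|=1} F z / (z - ω)² dz` with `F z = z^{k+1} / (1 - ω z)²` holomorphic on the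
closed unit disc, which Cauchy's formula evaluates to `(ω/σ)² F'(ω)`. The relation
`σ (1 - ω²) = ω √(4σ+1)` turns this into the stated closed form.
-/

open Complex Metric

theorem integral_exp_mul_div_sub_sq_eq_two_pi_mul_deriv {U : Set ℂ} {F : ℂ → ℂ} (hU : IsOpen U)
    (hdisc : closedBall (0 : ℂ) 1 ⊆ U) (hF : DifferentiableOn ℂ F U) {w : ℂ} (hw : ‖w‖ < 1) :
    ∫ θ in (0 : ℝ)..2 * Real.pi, exp (θ * I) * F (exp (θ * I)) / (exp (θ * I) - w) ^ 2 =
      2 * Real.pi * deriv F w := by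
  have hcauchy := two_pi_I_inv_smul_circleIntegral_sub_sq_inv_smul_of_differentiable hU hdisc hF
    (mem_ball_zero_iff.2 hw)
  have hcircle : (∮ z in C(0, 1), ((z - w) ^ 2)⁻¹ • F z) =
      I * ∫ θ in (0 : ℝ)..2 * Real.pi, exp (θ * I) * F (exp (θ * I)) / (exp (θ * I) - w) ^ 2 := by
    rw [circleIntegral, ← intervalIntegral.integral_const_mul]
    refine intervalIntegral.integral_congr fun θ _ => ?_
    simp only [deriv_circleMap, circleMap_zero, ofReal_one, one_mul, smul_eq_mul]
    ring
  rw [hcircle, smul_eq_mul] at hcauchy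
  have h2pi : (2 * Real.pi * I : ℂ) ≠ 0 := by simp [Real.pi_ne_zero]
  generalize (∫ θ in (0 : ℝ)..2 * Real.pi, exp (θ * I) * F (exp (θ * I)) / (exp (θ * I) - w) ^ 2)
    = J at hcauchy ⊢
  rw [← hcauchy]
  field_simp

theorem hasDerivAt_pow_succ_div_one_sub_mul_sq (a z : ℂ) (n : ℕ) (h : 1 - a * z ≠ 0) :
    HasDerivAt (fun z => z ^ (n + 1) / (1 - a * z) ^ 2)
      ((n + 1) * z ^ n / (1 - a * z) ^ 2 + 2 * a * z ^ (n + 1) / (1 - a * z) ^ 3) z := by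
  have hnum : HasDerivAt (fun z : ℂ => z ^ (n + 1)) ((n + 1) * z ^ n) z := by
    simpa using hasDerivAt_pow (n + 1) z
  have hden : HasDerivAt (fun z : ℂ => (1 - a * z) ^ 2) (2 * (1 - a * z) * -a) z := by
    simpa using (((hasDerivAt_id z).const_mul a).const_sub 1).fun_pow 2
  refine (hnum.fun_div hden (pow_ne_zero 2 h)).congr_deriv ?_
  field_simp
  ring

theorem one_add_two_mul_one_sub_cos_eq {σ ω : ℂ} (hω : ω ≠ 0)
    (hq : σ * ω ^ 2 - (2 * σ + 1) * ω + σ = 0) (θ : ℝ) :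
    1 + 2 * σ * (1 - cos θ) =
      σ * (1 - ω * exp (θ * I)) * (exp (θ * I) - ω) / (ω * exp (θ * I)) := by
  have he : exp (θ * I) ≠ 0 := exp_ne_zero _
  rw [cos, show -(θ : ℂ) * I = -(θ * I) by ring, exp_neg]
  field_simp
  linear_combination (-exp (θ * I)) * hq

theorem cexp_mul_div_one_add_two_mul_one_sub_cos_sq {σ ω : ℂ} (hσ : σ ≠ 0) (hω : ω ≠ 0)
    (hq : σ * ω ^ 2 - (2 * σ + 1) * ω + σ = 0) (k : ℕ) (θ : ℝ) :
    exp (I * k * θ) / (1 + 2 * σ * (1 - cos θ)) ^ 2 =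
      (ω / σ) ^ 2 * (exp (θ * I) * (exp (θ * I) ^ (k + 1) / (1 - ω * exp (θ * I)) ^ 2) /
        (exp (θ * I) - ω) ^ 2) := by
  have he : exp (θ * I) ≠ 0 := exp_ne_zero _
  rw [one_add_two_mul_one_sub_cos_eq hω hq, show I * k * θ = k * (θ * I) by ring, exp_nat_mul]
  -- if the factorization degenerates, both sides vanish through division by zero
  by_cases h : (1 - ω * exp (θ * I)) * (exp (θ * I) - ω) = 0
  · rcases mul_eq_zero.1 h with h | h <;> simp [h]
  · obtain ⟨h₁, h₂⟩ := mul_ne_zero_iff.1 h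
    field_simp
    ring

noncomputable def symbolRoot (σ : ℝ) : ℝ := (2 * σ + 1 - Real.sqrt (4 * σ + 1)) / (2 * σ)

section symbolRoot

variable {σ : ℝ}

theorem symbolRoot_pos (hσ : 0 < σ) : 0 < symbolRoot σ := by
  have hs := Real.sq_sqrt (show 0 ≤ 4 * σ + 1 by linarith)
  refine div_pos ?_ (by positivity)
  nlinarith [Real.sqrt_nonneg (4 * σ + 1)]

theorem symbolRoot_lt_one (hσ : 0 < σ) : symbolRoot σ < 1 := by
  rw [symbolRoot, div_lt_one (by positivity), sub_lt_iff_lt_add, add_lt_add_iff_left,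
    Real.lt_sqrt zero_le_one]
  linarith

theorem symbolRoot_quadratic (hσ : σ ≠ 0) (h : 0 ≤ 4 * σ + 1) :
    σ * symbolRoot σ ^ 2 - (2 * σ + 1) * symbolRoot σ + σ = 0 := by
  have hs := Real.sq_sqrt h
  rw [symbolRoot]
  generalize Real.sqrt (4 * σ + 1) = s at hs ⊢
  field_simp
  linear_combination hs

theorem mul_one_sub_symbolRoot_sq (hσ : σ ≠ 0) (h : 0 ≤ 4 * σ + 1) :
    σ * (1 - symbolRoot σ ^ 2) = symbolRoot σ * Real.sqrt (4 * σ + 1) := by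
  have hs := Real.sq_sqrt h
  rw [symbolRoot]
  generalize Real.sqrt (4 * σ + 1) = s at hs ⊢
  field_simp
  linear_combination hs

end symbolRoot

theorem fourier_coeff_inv_symbol_sq_eq_of_quadratic {σ ω : ℝ} (hω : ω ≠ 0) (hω₁ : |ω| < 1)
    (hq : σ * ω ^ 2 - (2 * σ + 1) * ω + σ = 0) (k : ℕ) :
    (1 / (2 * Real.pi) : ℂ) *
        ∫ θ in (0:ℝ)..(2 * Real.pi),
          exp (I * (k : ℂ) * (θ : ℂ)) / ((1 + 2 * σ * (1 - Real.cos θ) : ℝ) : ℂ) ^ 2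
      = (((ω / σ) ^ 2 * ((k + 1) * ω ^ k / (1 - ω ^ 2) ^ 2 + 2 * ω ^ (k + 2) / (1 - ω ^ 2) ^ 3)
          : ℝ) : ℂ) := by
  have hσ : σ ≠ 0 := by
    rintro rfl
    exact hω (by linarith)
  have hqC : (σ : ℂ) * ω ^ 2 - (2 * σ + 1) * ω + σ = 0 := by exact_mod_cast hq
  have hdisc : closedBall (0 : ℂ) 1 ⊆ {z | 1 - ω * z ≠ 0} := by
    intro z hz h
    have : ‖(ω : ℂ) * z‖ < 1 := by
      rw [norm_mul, norm_real, Real.norm_eq_abs]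
      exact mul_lt_one_of_nonneg_of_lt_one_left (abs_nonneg ω) hω₁ (mem_closedBall_zero_iff.1 hz)
    rw [← sub_eq_zero.1 h, norm_one] at this
    exact this.false
  have hF (z : ℂ) (hz : 1 - ω * z ≠ 0) := hasDerivAt_pow_succ_div_one_sub_mul_sq ω z k hz
  have hcauchy := integral_exp_mul_div_sub_sq_eq_two_pi_mul_deriv
    (isOpen_ne_fun (by fun_prop) continuous_const) hdisc
    (fun z hz => (hF z hz).differentiableAt.differentiableWithinAt) (w := ω) (by simpa using hω₁)
  rw [(hF ω (hdisc (by simpa using hω₁.le))).deriv] at hcauchy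
  have hpointwise (θ : ℝ) := cexp_mul_div_one_add_two_mul_one_sub_cos_sq (ofReal_ne_zero.2 hσ)
    (ofReal_ne_zero.2 hω) hqC k θ
  push_cast
  simp_rw [hpointwise, intervalIntegral.integral_const_mul]
  rw [hcauchy]
  have hω2 : (1 : ℂ) - ω ^ 2 ≠ 0 := by
    exact_mod_cast (sub_pos.2 ((sq_lt_one_iff_abs_lt_one ω).2 hω₁)).ne'
  field_simp
  ring

/-- For every `σ > 0` and every integer `k ≥ 0`,
`(1/2π) ∫₀^{2π} e^{ikθ}/(1 + 2σ(1 - cos θ))² dθ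
  = (k+1)ω^k/(4σ+1) + 2σω^{k+1}/(4σ+1)^{3/2}`,
where `ω = (2σ+1-√(4σ+1))/(2σ)`. -/
theorem fourier_coeff_inv_symbol_sq (σ : ℝ) (hσ : 0 < σ) (k : ℕ) :
    (1 / (2 * Real.pi) : ℂ) *
        ∫ θ in (0:ℝ)..(2 * Real.pi),
          Complex.exp (Complex.I * (k : ℂ) * (θ : ℂ)) /
            ((1 + 2 * σ * (1 - Real.cos θ) : ℝ) : ℂ) ^ 2
      = ((((k : ℝ) + 1) * ((2 * σ + 1 - Real.sqrt (4 * σ + 1)) / (2 * σ)) ^ k / (4 * σ + 1) +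
            2 * σ * ((2 * σ + 1 - Real.sqrt (4 * σ + 1)) / (2 * σ)) ^ (k + 1) /
              (4 * σ + 1) ^ ((3 : ℝ) / 2) : ℝ) : ℂ) := by
  have h4σ : 0 ≤ 4 * σ + 1 := by linarith
  have hω₀ := symbolRoot_pos hσ
  have hω₁ : |symbolRoot σ| < 1 := abs_lt.2 ⟨by linarith, symbolRoot_lt_one hσ⟩
  rw [show (2 * σ + 1 - Real.sqrt (4 * σ + 1)) / (2 * σ) = symbolRoot σ from rfl,
    fourier_coeff_inv_symbol_sq_eq_of_quadratic hω₀.ne' hω₁ (symbolRoot_quadratic hσ.ne' h4σ)]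
  congr 1
  have hs := mul_one_sub_symbolRoot_sq hσ.ne' h4σ
  have hcube : (4 * σ + 1) ^ ((3 : ℝ) / 2) = Real.sqrt (4 * σ + 1) ^ 3 := by
    rw [Real.sqrt_eq_rpow, ← Real.rpow_mul_natCast h4σ]
    norm_num
  have hs2 := Real.sq_sqrt h4σ
  have hs₀ : 0 < Real.sqrt (4 * σ + 1) := Real.sqrt_pos.2 (by linarith)
  rw [hcube]
  generalize symbolRoot σ = ω at *
  generalize Real.sqrt (4 * σ + 1) = s at *
  rw [← hs2, show 1 - ω ^ 2 = ω * s / σ by field_simp; linarith]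
  field_simp
  ring
end

section
/- For every σ > 0 and every integer d ≥ 1, the quantity γ := (1/d)·Σ_{j=0}^{d−1} 1/(1 + 2σ − 2σ·cos(2πj/d)) satisfies γ = (1 + ω^d) / ((1 − ω^d)·√(4σ+1)), where moreover 0 < ω < 1. -/
/-!
With `s = √(4σ+1)`, `ω` is the root in `(0, 1)` of `σ ω² - (2σ+1) ω + σ = 0`, which gives
`1 + 2σ - 2σ cos θ = (σ / ω) |e^{iθ} - ω|²` and `σ (1 - ω²) = s ω`; so each summand is the Poisson
kernel `(1 - ω²) / |e^{iθ} - ω|²` divided by `s`. The Poisson kernel is the real part of the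
Herglotz kernel `(z + ω) / (z - ω) = 2 / (1 - ω z⁻¹) - 1`, and averaging `1 / (1 - ω ζ^j)` over the
`d`-th roots of unity `ζ^j` gives `1 / (1 - ω^d)`: in the geometric series only the powers `ω^n`
with `d ∣ n` survive.
-/

open Finset Complex

namespace IsPrimitiveRoot

variable {K : Type*} [Field K] {ζ : K} {d : ℕ}

lemma geom_sum_pow_eq_zero (hζ : IsPrimitiveRoot ζ d) {n : ℕ} (hn : ¬d ∣ n) :
    ∑ j ∈ range d, (ζ ^ n) ^ j = 0 := by
  rw [geom_sum_eq (mt (hζ.pow_eq_one_iff_dvd n).mp hn), ← pow_mul, mul_comm, pow_mul,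
    hζ.pow_eq_one, one_pow, sub_self, zero_div]

lemma sum_inv_one_sub_mul_pow (hζ : IsPrimitiveRoot ζ d) {η : K} (hη : η ^ d ≠ 1) :
    ∑ j ∈ range d, (1 - η * ζ ^ j)⁻¹ = d / (1 - η ^ d) := by
  have hη' : 1 - η ^ d ≠ 0 := sub_ne_zero.mpr hη.symm
  have hd : 0 < d := Nat.pos_of_ne_zero fun hd => hη (by simp [hd])
  have geom (j : ℕ) :
      (1 - η * ζ ^ j)⁻¹ = (∑ n ∈ range d, η ^ n * (ζ ^ n) ^ j) / (1 - η ^ d) := by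
    have h := geom_sum_mul_neg (η * ζ ^ j) d
    rw [mul_pow, ← pow_mul, mul_comm j, pow_mul, hζ.pow_eq_one, one_pow, mul_one] at h
    have hx : 1 - η * ζ ^ j ≠ 0 := right_ne_zero_of_mul (h.symm ▸ hη')
    have hterm (n : ℕ) : η ^ n * (ζ ^ n) ^ j = (η * ζ ^ j) ^ n := by ring
    simp_rw [hterm]
    rw [eq_div_iff hη', ← h, mul_comm, mul_inv_cancel_right₀ hx]
  rw [sum_congr rfl fun j _ => geom j, ← sum_div, sum_comm]
  simp_rw [← mul_sum]
  rw [sum_eq_single_of_mem 0 (mem_range.mpr hd) fun n hn hn0 => by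
    rw [hζ.geom_sum_pow_eq_zero (Nat.not_dvd_of_pos_of_lt (Nat.pos_of_ne_zero hn0)
      (mem_range.mp hn)), mul_zero]]
  simp

lemma sum_add_div_sub (hζ : IsPrimitiveRoot ζ d) {w : K} (hw : w ^ d ≠ 1) :
    ∑ j ∈ range d, (ζ ^ j + w) / (ζ ^ j - w) = d * (1 + w ^ d) / (1 - w ^ d) := by
  have hd : d ≠ 0 := fun hd => hw (by simp [hd])
  have hw' : 1 - w ^ d ≠ 0 := sub_ne_zero.mpr hw.symm
  have herglotz (j : ℕ) : (ζ ^ j + w) / (ζ ^ j - w) = 2 * (1 - w * ζ⁻¹ ^ j)⁻¹ - 1 := by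
    have hzw : ζ ^ j - w ≠ 0 := fun h => hw (by
      rw [← sub_eq_zero.mp h, ← pow_mul, mul_comm, pow_mul, hζ.pow_eq_one, one_pow])
    have hζj : ζ ^ j ≠ 0 := pow_ne_zero j (hζ.ne_zero hd)
    rw [inv_pow, show 1 - w * (ζ ^ j)⁻¹ = (ζ ^ j - w) / ζ ^ j by field_simp]
    field_simp
    ring
  rw [sum_congr rfl fun j _ => herglotz j, sum_sub_distrib, ← mul_sum,
    hζ.inv.sum_inv_one_sub_mul_pow hw, sum_const, card_range, nsmul_eq_mul, mul_one]
  field_simp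
  ring

end IsPrimitiveRoot

lemma poissonKernel_zero_ofReal_exp_mul_I (r θ : ℝ) :
    poissonKernel 0 r (exp (θ * I)) = (1 - r ^ 2) / (1 - 2 * r * Real.cos θ + r ^ 2) := by
  rw [poissonKernel_def, sub_zero, sub_zero, norm_exp_ofReal_mul_I, norm_real,
    Real.norm_eq_abs, sq_abs, ← normSq_eq_norm_sq, normSq_apply]
  simp only [sub_re, sub_im, ofReal_re, ofReal_im, exp_ofReal_mul_I_re, exp_ofReal_mul_I_im]
  congr 1
  · ring
  · linear_combination Real.sin_sq_add_cos_sq θ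

lemma sum_poissonKernel_zero_exp_two_pi_mul {r : ℝ} {d : ℕ} (hr : r ^ d ≠ 1) :
    ∑ j ∈ range d, poissonKernel 0 r (exp ((2 * Real.pi * j / d : ℝ) * I)) =
      d * (1 + r ^ d) / (1 - r ^ d) := by
  have hd : d ≠ 0 := fun hd => hr (by simp [hd])
  have hpow (j : ℕ) : exp (2 * Real.pi * I / d) ^ j = exp ((2 * Real.pi * j / d : ℝ) * I) := by
    rw [← exp_nat_mul]; push_cast; ring_nf
  simp_rw [poissonKernel_eq_re_herglotzRieszKernel, Function.comp_apply, herglotzRieszKernel_def,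
    sub_zero, ← hpow, ← re_sum]
  rw [(isPrimitiveRoot_exp d hd).sum_add_div_sub (w := (r : ℂ)) (by exact_mod_cast hr)]
  exact_mod_cast ofReal_re (d * (1 + r ^ d) / (1 - r ^ d))

lemma one_div_one_add_two_mul_sub_two_mul_cos {σ s ω : ℝ} (hσ : 0 < σ)
    (hs : s ^ 2 = 4 * σ + 1) (hω : 2 * σ * ω = 2 * σ + 1 - s) (θ : ℝ) :
    1 / (1 + 2 * σ - 2 * σ * Real.cos θ) =
      (1 - ω ^ 2) / (1 - 2 * ω * Real.cos θ + ω ^ 2) / s := by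
  have hs0 : s ≠ 0 := by rintro rfl; nlinarith
  have hω0 : ω ≠ 0 := by rintro rfl; nlinarith
  have hquad : σ * ω ^ 2 - (2 * σ + 1) * ω + σ = 0 := by
    apply mul_left_cancel₀ (show 4 * σ ≠ 0 by positivity)
    linear_combination (2 * σ * ω - (2 * σ + 1) - s) * hω + hs
  have hdenom : 1 + 2 * σ - 2 * σ * Real.cos θ =
      σ / ω * (1 - 2 * ω * Real.cos θ + ω ^ 2) := by
    field_simp
    linear_combination -hquad
  have hnum : σ * (1 - ω ^ 2) = s * ω := by
    apply mul_left_cancel₀ (show 2 * σ ≠ 0 by positivity)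
    linear_combination -2 * σ * hquad - (2 * σ + 1 + s) * hω + hs
  rw [hdenom, show 1 - ω ^ 2 = s * ω / σ by rw [eq_div_iff hσ.ne', mul_comm, hnum]]
  field_simp

/-- For every `σ > 0` and every integer `d ≥ 1`, the quantity
`γ = (1/d) ∑_{j=0}^{d-1} 1/(1 + 2σ - 2σ cos(2πj/d))` satisfies
`γ = (1 + ω^d)/((1 - ω^d)√(4σ+1))`, where `ω = (2σ+1-√(4σ+1))/(2σ)` and `0 < ω < 1`. -/
theorem gamma_closed_form (σ : ℝ) (hσ : 0 < σ) (d : ℕ) (hd : 1 ≤ d) :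
    let ω : ℝ := (2 * σ + 1 - Real.sqrt (4 * σ + 1)) / (2 * σ)
    0 < ω ∧ ω < 1 ∧
    (1 / d : ℝ) * ∑ j : Fin d, 1 / (1 + 2 * σ - 2 * σ * Real.cos (2 * Real.pi * j.val / d))
      = (1 + ω ^ d) / ((1 - ω ^ d) * Real.sqrt (4 * σ + 1)) := by
  intro ω
  set s := Real.sqrt (4 * σ + 1)
  have hs : s ^ 2 = 4 * σ + 1 := Real.sq_sqrt (by linarith)
  have hs1 : 1 < s := by nlinarith [Real.sqrt_nonneg (4 * σ + 1)]
  have hs2 : s < 2 * σ + 1 := by nlinarith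
  have hω : 2 * σ * ω = 2 * σ + 1 - s := mul_div_cancel₀ _ (by positivity)
  have hω0 : 0 < ω := by nlinarith
  have hω1 : ω < 1 := by nlinarith
  refine ⟨hω0, hω1, ?_⟩
  have hωd : ω ^ d < 1 := pow_lt_one₀ hω0.le hω1 (by omega)
  simp_rw [one_div_one_add_two_mul_sub_two_mul_cos hσ hs hω,
    ← poissonKernel_zero_ofReal_exp_mul_I, ← sum_div]
  rw [Fin.sum_univ_eq_sum_range
      (fun j => poissonKernel 0 ω (exp ((2 * Real.pi * j / d : ℝ) * I))),
    sum_poissonKernel_zero_exp_two_pi_mul hωd.ne]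
  field_simp
end

section
/- For every σ > 0 and every integer d ≥ 1, the Fourier sampling identity (1/d)·Σ_{j=0}^{d−1} 1/(1 + 2σ(1 − cos(2πj/d))) = Σ_{ℓ ∈ ℤ} ω^{|ℓ|·d} / √(4σ+1) holds, where the right-hand side is an absolutely convergent bilateral series. -/
/-!
Let `ω` be the root in `(0, 1)` of `σ ω² - (2σ + 1) ω + σ = 0`. Then `1 / (1 + 2σ(1 - cos θ))`
is `P_ω(θ) / √(4σ + 1)`, where `P_ω(θ) = (1 - ω²) / |e^{iθ} - ω|²` is the Poisson kernel, the real
part of the Herglotz–Riesz kernel `(e^{iθ} + ω) / (e^{iθ} - ω) = 2 (1 - ω e^{-iθ})⁻¹ - 1`.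
Over the `d`-th roots of unity `ζ`, expanding `(1 - xζ)⁻¹ = ∑_{k<d} (xζ)ᵏ / (1 - xᵈ)` and summing
over `ζ` kills every `k ≠ 0`, so `∑_ζ (1 - xζ)⁻¹ = d / (1 - xᵈ)`. Hence the left side equals
`(1 + ωᵈ) / ((1 - ωᵈ) √(4σ + 1))`, the value of the two-sided geometric series on the right.
-/

open Complex Finset Real

theorem IsPrimitiveRoot.sum_range_pow_pow_eq_zero {K : Type*} [Field K] {ζ : K} {d k : ℕ}
    (hζ : IsPrimitiveRoot ζ d) (hk0 : k ≠ 0) (hkd : k < d) :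
    ∑ j ∈ range d, (ζ ^ k) ^ j = 0 := by
  rw [geom_sum_eq (hζ.pow_ne_one_of_pos_of_lt hk0 hkd), ← pow_mul, mul_comm, pow_mul,
    hζ.pow_eq_one, one_pow, sub_self, zero_div]

theorem IsPrimitiveRoot.sum_range_inv_one_sub_mul_pow {K : Type*} [Field K] {ζ x : K} {d : ℕ}
    (hζ : IsPrimitiveRoot ζ d) (hx : x ^ d ≠ 1) :
    ∑ j ∈ range d, (1 - x * ζ ^ j)⁻¹ = d / (1 - x ^ d) := by
  have hxd : 1 - x ^ d ≠ 0 := sub_ne_zero.2 hx.symm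
  have hgeom (j : ℕ) :
      (1 - x * ζ ^ j)⁻¹ = (∑ k ∈ range d, x ^ k * (ζ ^ k) ^ j) / (1 - x ^ d) := by
    have h := mul_neg_geom_sum (x * ζ ^ j) d
    rw [mul_pow, ← pow_mul, mul_comm j, pow_mul, hζ.pow_eq_one, one_pow, mul_one] at h
    have hne : 1 - x * ζ ^ j ≠ 0 := fun h0 => hxd (by rw [← h, h0, zero_mul])
    rw [eq_div_iff hxd, ← h, inv_mul_cancel_left₀ hne]
    exact sum_congr rfl fun k _ => by ring
  simp_rw [hgeom, ← sum_div]
  rw [sum_comm]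
  simp_rw [← mul_sum]
  rw [sum_eq_single 0
    (fun k hk hk0 => by rw [hζ.sum_range_pow_pow_eq_zero hk0 (mem_range.1 hk), mul_zero])
    (fun h => by simp_all)]
  simp

theorem IsPrimitiveRoot.sum_range_add_div_sub {K : Type*} [Field K] {ζ w : K} {d : ℕ}
    (hζ : IsPrimitiveRoot ζ d) (hw : w ^ d ≠ 1) :
    ∑ j ∈ range d, (ζ ^ j + w) / (ζ ^ j - w) = d * (1 + w ^ d) / (1 - w ^ d) := by
  have hwd : 1 - w ^ d ≠ 0 := sub_ne_zero.2 hw.symm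
  have hterm : ∀ j ∈ range d, (ζ ^ j + w) / (ζ ^ j - w) = 2 * (1 - w * ζ⁻¹ ^ j)⁻¹ - 1 := by
    intro j hj
    have hζj : ζ ^ j ≠ 0 := pow_ne_zero j (hζ.ne_zero (Nat.ne_zero_of_lt (mem_range.1 hj)))
    have hne : ζ ^ j - w ≠ 0 := by
      intro h
      rw [sub_eq_zero.1 h |>.symm, ← pow_mul, mul_comm, pow_mul, hζ.pow_eq_one, one_pow] at hw
      exact hw rfl
    rw [inv_pow, ← div_eq_mul_inv w, one_sub_div hζj, inv_div]
    field_simp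
    ring
  rw [sum_congr rfl hterm, sum_sub_distrib, ← mul_sum, hζ.inv.sum_range_inv_one_sub_mul_pow hw]
  simp only [sum_const, card_range, nsmul_eq_mul, mul_one]
  field_simp
  ring

theorem Complex.exp_two_pi_mul_div_mul_I_eq_pow (j d : ℕ) :
    cexp (↑(2 * π * j / d) * I) = cexp (2 * π * I / d) ^ j := by
  rw [← Complex.exp_nat_mul]
  congr 1
  push_cast
  ring

theorem poissonKernel_zero_ofReal_exp (r θ : ℝ) :
    poissonKernel 0 r (cexp (θ * I)) = (1 - r ^ 2) / (1 - 2 * r * Real.cos θ + r ^ 2) := by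
  rw [poissonKernel_def]
  simp only [sub_zero, norm_exp_ofReal_mul_I, norm_real, Real.norm_eq_abs, sq_abs, one_pow]
  congr 1
  rw [← normSq_eq_norm_sq, normSq_apply]
  simp only [sub_re, sub_im, ofReal_re, ofReal_im, exp_ofReal_mul_I_re, exp_ofReal_mul_I_im]
  linear_combination Real.sin_sq_add_cos_sq θ

theorem sum_range_poissonKernel_zero {ζ : ℂ} {d : ℕ} (hζ : IsPrimitiveRoot ζ d) (hd : d ≠ 0)
    {r : ℝ} (hr : |r| < 1) :
    ∑ j ∈ range d, poissonKernel 0 r (ζ ^ j) = d * (1 + r ^ d) / (1 - r ^ d) := by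
  have hrd : r ^ d ≠ 1 := by
    refine ne_of_lt (lt_of_le_of_lt (le_abs_self _) ?_)
    rw [abs_pow]
    exact pow_lt_one₀ (abs_nonneg r) hr hd
  have hsum := hζ.sum_range_add_div_sub (w := (r : ℂ)) (by exact_mod_cast hrd)
  rw [show (d : ℂ) * (1 + r ^ d) / (1 - r ^ d) = ((d * (1 + r ^ d) / (1 - r ^ d) : ℝ) : ℂ) by
    push_cast; rfl] at hsum
  simp only [poissonKernel_eq_re_herglotzRieszKernel, Function.comp_apply,
    herglotzRieszKernel_def, sub_zero]
  rw [← re_sum, hsum, ofReal_re]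

theorem one_sub_two_mul_mul_cos_add_sq_pos {r : ℝ} (hr : |r| < 1) (θ : ℝ) :
    0 < 1 - 2 * r * Real.cos θ + r ^ 2 := by
  have hrc : r * Real.cos θ ≤ |r| :=
    calc r * Real.cos θ ≤ |r * Real.cos θ| := le_abs_self _
      _ = |r| * |Real.cos θ| := abs_mul _ _
      _ ≤ |r| := mul_le_of_le_one_right (abs_nonneg r) (abs_cos_le_one θ)
  nlinarith [sq_abs r]

theorem hasSum_pow_natAbs {p : ℝ} (hp : |p| < 1) :
    HasSum (fun ℓ : ℤ => p ^ ℓ.natAbs) ((1 + p) / (1 - p)) := by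
  have hp1 : 1 - p ≠ 0 := sub_ne_zero.2 (lt_of_le_of_lt (le_abs_self p) hp).ne'
  have hgeom := hasSum_geometric_of_abs_lt_one hp
  have hneg : HasSum (fun n : ℕ => p ^ (-(n + 1 : ℤ)).natAbs) (p * (1 - p)⁻¹) := by
    have hnatAbs (n : ℕ) : (-(n + 1 : ℤ)).natAbs = n + 1 := by omega
    simpa only [hnatAbs, pow_succ'] using hgeom.mul_left p
  convert HasSum.of_nat_of_neg_add_one (f := fun ℓ : ℤ => p ^ ℓ.natAbs) hgeom hneg using 1
  field_simp

noncomputable def poissonRadius (σ : ℝ) : ℝ := (2 * σ + 1 - √(4 * σ + 1)) / (2 * σ)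

section poissonRadius

variable {σ : ℝ} (hσ : 0 < σ)
include hσ

theorem sq_sqrt_four_mul_add_one : √(4 * σ + 1) ^ 2 = 4 * σ + 1 :=
  Real.sq_sqrt (by linarith)

theorem one_lt_sqrt_four_mul_add_one : 1 < √(4 * σ + 1) := by
  rw [Real.lt_sqrt zero_le_one]
  linarith

theorem poissonRadius_pos : 0 < poissonRadius σ := by
  have hs := sq_sqrt_four_mul_add_one hσ
  have hs1 := one_lt_sqrt_four_mul_add_one hσ
  exact div_pos (by nlinarith) (by linarith)

theorem poissonRadius_lt_one : poissonRadius σ < 1 := by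
  rw [poissonRadius, div_lt_one (by linarith)]
  linarith [one_lt_sqrt_four_mul_add_one hσ]

theorem abs_poissonRadius_lt_one : |poissonRadius σ| < 1 :=
  abs_lt.2 ⟨by linarith [poissonRadius_pos hσ], poissonRadius_lt_one hσ⟩

theorem mul_one_add_poissonRadius_sq :
    σ * (1 + poissonRadius σ ^ 2) = (2 * σ + 1) * poissonRadius σ := by
  have hs := sq_sqrt_four_mul_add_one hσ
  rw [poissonRadius]
  generalize √(4 * σ + 1) = s at hs ⊢
  field_simp
  linear_combination hs

theorem mul_one_sub_poissonRadius_sq :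
    σ * (1 - poissonRadius σ ^ 2) = poissonRadius σ * √(4 * σ + 1) := by
  have hs := sq_sqrt_four_mul_add_one hσ
  rw [poissonRadius]
  generalize √(4 * σ + 1) = s at hs ⊢
  field_simp
  linear_combination hs

theorem one_div_one_add_two_mul_one_sub_cos (θ : ℝ) :
    1 / (1 + 2 * σ * (1 - Real.cos θ)) =
      poissonKernel 0 (poissonRadius σ) (cexp (θ * I)) / √(4 * σ + 1) := by
  have hB := one_sub_two_mul_mul_cos_add_sq_pos (abs_poissonRadius_lt_one hσ) θ
  have hA : 0 < 1 + 2 * σ * (1 - Real.cos θ) := by nlinarith [Real.cos_le_one θ]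
  have hs : 0 < √(4 * σ + 1) := by linarith [one_lt_sqrt_four_mul_add_one hσ]
  rw [poissonKernel_zero_ofReal_exp, div_div, eq_div_iff (mul_pos hB hs).ne',
    one_div_mul_eq_div, div_eq_iff hA.ne']
  refine mul_left_cancel₀ hσ.ne' ?_
  linear_combination √(4 * σ + 1) * mul_one_add_poissonRadius_sq hσ
    - (1 + 2 * σ * (1 - Real.cos θ)) * mul_one_sub_poissonRadius_sq hσ

end poissonRadius

/-- For every `σ > 0` and every integer `d ≥ 1`, the Fourier sampling identity
`(1/d) ∑_{j=0}^{d-1} 1/(1 + 2σ(1 - cos(2πj/d))) = ∑_{ℓ ∈ ℤ} ω^{|ℓ|d}/√(4σ+1)` holds,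
where `ω = (2σ+1-√(4σ+1))/(2σ)` and the bilateral series is absolutely convergent. -/
theorem fourier_sampling_identity (σ : ℝ) (hσ : 0 < σ) (d : ℕ) (hd : 1 ≤ d) :
    let ω : ℝ := (2 * σ + 1 - Real.sqrt (4 * σ + 1)) / (2 * σ)
    Summable (fun ℓ : ℤ => ω ^ (ℓ.natAbs * d) / Real.sqrt (4 * σ + 1)) ∧
    (1 / d : ℝ) * ∑ j : Fin d, 1 / (1 + 2 * σ * (1 - Real.cos (2 * Real.pi * j.val / d)))
      = ∑' ℓ : ℤ, ω ^ (ℓ.natAbs * d) / Real.sqrt (4 * σ + 1) := by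
  intro ω
  rw [show ω = poissonRadius σ from rfl]
  have hω := abs_poissonRadius_lt_one hσ
  have hωd : |poissonRadius σ ^ d| < 1 := by
    rw [abs_pow]
    exact pow_lt_one₀ (abs_nonneg _) hω (by omega)
  have hsum : HasSum (fun ℓ : ℤ => poissonRadius σ ^ (ℓ.natAbs * d) / √(4 * σ + 1))
      ((1 + poissonRadius σ ^ d) / (1 - poissonRadius σ ^ d) / √(4 * σ + 1)) := by
    simpa only [pow_mul'] using (hasSum_pow_natAbs hωd).div_const _
  refine ⟨hsum.summable, ?_⟩
  simp_rw [one_div_one_add_two_mul_one_sub_cos hσ, Complex.exp_two_pi_mul_div_mul_I_eq_pow]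
  rw [hsum.tsum_eq, ← sum_div,
    Fin.sum_univ_eq_sum_range
      (fun j => poissonKernel 0 (poissonRadius σ) (cexp (2 * π * I / d) ^ j)),
    sum_range_poissonKernel_zero (Complex.isPrimitiveRoot_exp d (by omega)) (by omega) hω]
  have hd' : (d : ℝ) ≠ 0 := by positivity
  field_simp
end

section
/- For every σ > 0 and every integer d ≥ 2, one has 0 < (1/d)·Σ_{j=0}^{d−1} 1/(1 + 2σ − 2σ·cos(2πj/d))² < 1; that is, the constant β appearing in the nonconvex utility bound of DP-LSSGD lies in the open interval (0,1). -/
/-- For every `σ > 0` and every integer `d ≥ 2`, the constant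
`β = (1/d) ∑_{j=0}^{d-1} 1/(1 + 2σ - 2σ cos(2πj/d))²` appearing in the nonconvex
utility bound of DP-LSSGD lies in the open interval `(0,1)`. -/
theorem beta_mem_Ioo (σ : ℝ) (hσ : 0 < σ) (d : ℕ) (hd : 2 ≤ d) :
    0 < (1 / d : ℝ) *
        ∑ j : Fin d, 1 / (1 + 2 * σ - 2 * σ * Real.cos (2 * Real.pi * j.val / d)) ^ 2 ∧
    (1 / d : ℝ) *
        ∑ j : Fin d, 1 / (1 + 2 * σ - 2 * σ * Real.cos (2 * Real.pi * j.val / d)) ^ 2 < 1 := by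
  have hd0 : (0 : ℝ) < d := by positivity
  have hdenom : ∀ j : Fin d, 1 ≤ 1 + 2 * σ - 2 * σ * Real.cos (2 * Real.pi * j.val / d) := by
    intro j
    have h1 : Real.cos (2 * Real.pi * j.val / d) ≤ 1 := Real.cos_le_one _
    nlinarith
  have hpos : ∀ j : Fin d, (0:ℝ) < 1 / (1 + 2 * σ - 2 * σ * Real.cos (2 * Real.pi * j.val / d)) ^ 2 := by
    intro j
    have := hdenom j
    positivity
  constructor
  · have : (0:ℝ) < ∑ j : Fin d, 1 / (1 + 2 * σ - 2 * σ * Real.cos (2 * Real.pi * j.val / d)) ^ 2 :=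
      Finset.sum_pos (fun j _ => hpos j) ⟨⟨0, by omega⟩, Finset.mem_univ _⟩
    positivity
  · have hle : ∀ j : Fin d, 1 / (1 + 2 * σ - 2 * σ * Real.cos (2 * Real.pi * j.val / d)) ^ 2 ≤ 1 := by
      intro j
      have h := hdenom j
      rw [div_le_one (by nlinarith)]
      nlinarith
    have hstrict : 1 / (1 + 2 * σ - 2 * σ * Real.cos (2 * Real.pi * (⟨1, by omega⟩ : Fin d).val / d)) ^ 2 < 1 := by
      have hπ := Real.pi_pos
      have hx0 : (0:ℝ) < 2 * Real.pi * (1:ℕ) / d := by positivity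
      have hx2 : (2 * Real.pi * (1:ℕ) / d : ℝ) < 2 * Real.pi := by
        rw [div_lt_iff₀ hd0]
        have : (1:ℝ) < d := by exact_mod_cast (by omega : 1 < d)
        push_cast
        nlinarith
      have hcos : Real.cos (2 * Real.pi * (1:ℕ) / d) < 1 := by
        rcases lt_or_eq_of_le (Real.cos_le_one (2 * Real.pi * (1:ℕ) / d)) with h | h
        · exact h
        · exfalso
          have := (Real.cos_eq_one_iff_of_lt_of_lt (by linarith) hx2).1 h
          linarith
      have hden : 1 < 1 + 2 * σ - 2 * σ * Real.cos (2 * Real.pi * (1:ℕ) / d) := by nlinarith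
      rw [div_lt_one (by nlinarith)]
      simp only [Fin.val_mk] at *
      push_cast
      nlinarith
    calc (1 / d : ℝ) * ∑ j : Fin d, 1 / (1 + 2 * σ - 2 * σ * Real.cos (2 * Real.pi * j.val / d)) ^ 2
        < (1 / d : ℝ) * d := by
          apply mul_lt_mul_of_pos_left _ (by positivity)
          calc ∑ j : Fin d, 1 / (1 + 2 * σ - 2 * σ * Real.cos (2 * Real.pi * j.val / d)) ^ 2
              < ∑ _j : Fin d, (1:ℝ) :=
                Finset.sum_lt_sum (fun j _ => hle j) ⟨⟨1, by omega⟩, Finset.mem_univ _, hstrict⟩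
            _ = d := by simp
      _ = 1 := by field_simp
end

section
/- For every α > 1, every ν > 0, and every pair of means m₁, m₂ ∈ ℝ^d with ‖m₁ − m₂‖₂ ≤ Δ, the Rényi divergence of order α between the Gaussian measures N(m₁, ν²I_d) and N(m₂, ν²I_d) on ℝ^d satisfies D_α(N(m₁, ν²I_d) ‖ N(m₂, ν²I_d)) ≤ α·Δ²/(2ν²); in other words, the Gaussian mechanism with noise scale ν applied to a query of ℓ₂-sensitivity Δ satisfies (α, αΔ²/(2ν²))-Rényi differential privacy. -/
/-!
The divergence can be computed exactly. Both measures are products, so the density of one with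
respect to the other is the product of the one-dimensional likelihood ratios `p_{m₁ j} / p_{m₂ j}`,
and the integral of its `α`-th power factorises. In one dimension, completing the square gives
`p_b · (p_a / p_b) ^ α = exp (α (α - 1) (a - b)² / (2ν²)) · p_{b + α (a - b)}`, so that
`D_α = α ‖m₁ - m₂‖² / (2ν²)`.
-/

open MeasureTheory ProbabilityTheory

/-- The Rényi divergence of order `α` between two measures:
`D_α(μ‖ν) = (1/(α-1)) log ∫ (dμ/dν)^α dν`. -/
noncomputable def renyiDivergence {Ω : Type*} [MeasurableSpace Ω] (α : ℝ)
    (μ ν : Measure Ω) : ℝ :=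
  (α - 1)⁻¹ * Real.log (∫ x, ((μ.rnDeriv ν x).toReal) ^ α ∂ν)

/-- The Gaussian measure `N(m, ν²I_d)` on `ℝ^d`, the product of the one-dimensional
Gaussian measures `N(m_j, ν²)`. -/
noncomputable def gaussianVec (d : ℕ) (m : Fin d → ℝ) (ν : ℝ) :
    Measure (Fin d → ℝ) :=
  Measure.pi fun j => gaussianReal (m j) (Real.toNNReal (ν ^ 2))

open scoped ENNReal NNReal

section Pi

variable {ι : Type*} [Fintype ι] {Ω : ι → Type*} {mΩ : ∀ i, MeasurableSpace (Ω i)}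
  {μ ν : (i : ι) → Measure (Ω i)} [∀ i, IsProbabilityMeasure (ν i)]

theorem lintegral_fintype_prod_eq_prod {f : (i : ι) → Ω i → ℝ≥0∞} (hf : ∀ i, Measurable (f i)) :
    ∫⁻ x, ∏ i, f i (x i) ∂Measure.pi ν = ∏ i, ∫⁻ t, f i t ∂ν i := by
  rw [lintegral_prod_eq_prod_lintegral_of_indepFun _ _
    (iIndepFun_pi fun i => (hf i).aemeasurable) fun i => (hf i).comp (measurable_pi_apply i)]
  exact Finset.prod_congr rfl fun i _ => (measurePreserving_eval ν i).lintegral_comp (hf i)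

theorem Measure.pi_eq_withDensity_prod [∀ i, IsProbabilityMeasure (μ i)]
    {f : (i : ι) → Ω i → ℝ≥0∞} (hf : ∀ i, Measurable (f i))
    (hμ : ∀ i, μ i = (ν i).withDensity (f i)) :
    Measure.pi μ = (Measure.pi ν).withDensity fun x => ∏ i, f i (x i) := by
  refine Measure.pi_eq fun s hs => ?_
  have hind : (Set.univ.pi s).indicator (fun x => ∏ i, f i (x i))
      = fun x => ∏ i, (s i).indicator (f i) (x i) := by
    funext x
    classical simp [Set.indicator, Finset.prod_ite_zero]
  rw [withDensity_apply _ (MeasurableSet.univ_pi hs),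
    ← lintegral_indicator (MeasurableSet.univ_pi hs), hind,
    lintegral_fintype_prod_eq_prod fun i => (hf i).indicator (hs i)]
  refine Finset.prod_congr rfl fun i _ => ?_
  rw [lintegral_indicator (hs i), hμ i, withDensity_apply _ (hs i)]

theorem integral_rnDeriv_pi_rpow [∀ i, IsProbabilityMeasure (μ i)] {r : (i : ι) → Ω i → ℝ}
    (hr : ∀ i, Measurable (r i)) (hr_nonneg : ∀ i t, 0 ≤ r i t)
    (hμ : ∀ i, μ i = (ν i).withDensity fun t => ENNReal.ofReal (r i t)) (α : ℝ) :
    ∫ x, ((Measure.pi μ).rnDeriv (Measure.pi ν) x).toReal ^ α ∂Measure.pi ν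
      = ∏ i, ∫ t, r i t ^ α ∂ν i := by
  have hf : ∀ i, Measurable fun t => ENNReal.ofReal (r i t) := fun i => (hr i).ennreal_ofReal
  have hrn : (Measure.pi μ).rnDeriv (Measure.pi ν) =ᵐ[Measure.pi ν]
      fun x => ∏ i, ENNReal.ofReal (r i (x i)) := by
    rw [Measure.pi_eq_withDensity_prod hf hμ]
    exact Measure.rnDeriv_withDensity _ (Finset.measurable_prod _ fun i _ =>
      (hf i).comp (measurable_pi_apply i))
  rw [← integral_fintype_prod_eq_prod]
  refine integral_congr_ae ?_
  filter_upwards [hrn] with x hx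
  rw [hx, ENNReal.toReal_prod]
  simp only [ENNReal.toReal_ofReal (hr_nonneg _ _)]
  exact (Real.finsetProd_rpow _ _ (fun i _ => hr_nonneg i (x i)) α).symm

end Pi

section Gaussian

variable {v : ℝ≥0}

theorem gaussianReal_eq_withDensity_pdf_div (a b : ℝ) (hv : v ≠ 0) :
    gaussianReal a v = (gaussianReal b v).withDensity
      fun t => ENNReal.ofReal (gaussianPDFReal a v t / gaussianPDFReal b v t) := by
  rw [gaussianReal_of_var_ne_zero _ hv, gaussianReal_of_var_ne_zero _ hv,
    ← withDensity_mul _ (measurable_gaussianPDF _ _)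
      (g := fun t => ENNReal.ofReal (gaussianPDFReal a v t / gaussianPDFReal b v t))
      ((measurable_gaussianPDFReal _ _).div (measurable_gaussianPDFReal _ _)).ennreal_ofReal]
  congr 1
  funext t
  rw [Pi.mul_apply, gaussianPDF, gaussianPDF, ← ENNReal.ofReal_mul (gaussianPDFReal_nonneg _ _ _),
    mul_div_cancel₀ _ (gaussianPDFReal_pos _ _ _ hv).ne']

theorem gaussianPDFReal_mul_div_rpow (a b α t : ℝ) (hv : v ≠ 0) :
    gaussianPDFReal b v t * (gaussianPDFReal a v t / gaussianPDFReal b v t) ^ α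
      = Real.exp (α * (α - 1) * (a - b) ^ 2 / (2 * v)) *
          gaussianPDFReal (b + α * (a - b)) v t := by
  have hc : (Real.sqrt (2 * Real.pi * v))⁻¹ ≠ 0 := by positivity
  simp only [gaussianPDFReal]
  rw [mul_div_mul_left _ _ hc, ← Real.exp_sub, Real.rpow_def_of_pos (Real.exp_pos _),
    Real.log_exp, mul_left_comm, ← Real.exp_add, mul_assoc, ← Real.exp_add]
  congr 2
  field_simp
  ring

theorem integral_gaussianPDFReal_div_rpow (a b α : ℝ) (hv : v ≠ 0) :
    ∫ t, (gaussianPDFReal a v t / gaussianPDFReal b v t) ^ α ∂gaussianReal b v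
      = Real.exp (α * (α - 1) * (a - b) ^ 2 / (2 * v)) := by
  simp only [integral_gaussianReal_eq_integral_smul hv, smul_eq_mul,
    gaussianPDFReal_mul_div_rpow _ _ _ _ hv]
  rw [integral_const_mul, integral_gaussianPDFReal_eq_one _ hv, mul_one]

end Gaussian

theorem renyiDivergence_gaussianVec (d : ℕ) (m₁ m₂ : Fin d → ℝ) {α ν : ℝ} (hα : α ≠ 1)
    (hν : ν ≠ 0) :
    renyiDivergence α (gaussianVec d m₁ ν) (gaussianVec d m₂ ν)
      = α * (∑ j, (m₁ j - m₂ j) ^ 2) / (2 * ν ^ 2) := by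
  have hv : Real.toNNReal (ν ^ 2) ≠ 0 := by simpa using hν
  have hv_coe : (Real.toNNReal (ν ^ 2) : ℝ) = ν ^ 2 := Real.coe_toNNReal _ (sq_nonneg ν)
  rw [renyiDivergence, gaussianVec, gaussianVec,
    integral_rnDeriv_pi_rpow (fun _ => (measurable_gaussianPDFReal _ _).div
      (measurable_gaussianPDFReal _ _)) (fun _ _ => div_nonneg (gaussianPDFReal_nonneg _ _ _)
      (gaussianPDFReal_nonneg _ _ _)) (fun _ => gaussianReal_eq_withDensity_pdf_div _ _ hv) α]
  simp only [Pi.div_apply, integral_gaussianPDFReal_div_rpow _ _ _ hv, hv_coe]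
  rw [← Real.exp_sum, Real.log_exp, ← Finset.sum_div, ← Finset.mul_sum]
  have hα' : α - 1 ≠ 0 := sub_ne_zero.mpr hα
  field_simp

theorem renyiDivergence_gaussian_le_general (d : ℕ) (α ν Δ : ℝ) (hα : 1 < α) (hν : 0 < ν)
    (m₁ m₂ : Fin d → ℝ)
    (hm : Real.sqrt (∑ j, (m₁ j - m₂ j) ^ 2) ≤ Δ) :
    renyiDivergence α (gaussianVec d m₁ ν) (gaussianVec d m₂ ν) ≤ α * Δ ^ 2 / (2 * ν ^ 2) := by
  rw [renyiDivergence_gaussianVec d m₁ m₂ hα.ne' hν.ne']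
  have hsum : ∑ j, (m₁ j - m₂ j) ^ 2 ≤ Δ ^ 2 := by
    rw [← Real.sq_sqrt (Finset.sum_nonneg fun j _ => sq_nonneg (m₁ j - m₂ j))]
    exact pow_le_pow_left₀ (Real.sqrt_nonneg _) hm 2
  gcongr

/-- Rényi differential privacy of the Gaussian mechanism: for `α > 1`, `ν > 0` and means
with `‖m₁ - m₂‖₂ ≤ Δ`, one has `D_α(N(m₁, ν²I) ‖ N(m₂, ν²I)) ≤ αΔ²/(2ν²)`. -/
theorem renyiDivergence_gaussian_le (d : ℕ) (α ν Δ : ℝ) (hα : 1 < α) (hν : 0 < ν)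
    (hΔ : 0 ≤ Δ) (m₁ m₂ : Fin d → ℝ)
    (hm : Real.sqrt (∑ j, (m₁ j - m₂ j) ^ 2) ≤ Δ) :
    renyiDivergence α (gaussianVec d m₁ ν) (gaussianVec d m₂ ν) ≤ α * Δ ^ 2 / (2 * ν ^ 2) :=
  renyiDivergence_gaussian_le_general d α ν Δ hα hν m₁ m₂ hm
end
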